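/- arXiv:1502.04631 — 2 statements merged into one kernel-verified Lean document; each statement's English description precedes it below -/
import Mathlib

section
/- Let θ ∈ ℝ^m be such that |θ_i − θ_j| ≥ 1 for all i ≠ j. Let f(x) = (e^x − 1)/(e^x + 1) and η_{ij} = sign(θ_i − θ_j). Then ∑_{i<j} (f(θ_i − θ_j) − η_{ij})² ≤ ∑_{t=1}^{m-1} (m − t) · 4 e^{−2t} ≤ C·m for an absolute constant C (e.g., C = 4/(e² − 1)). -/
open Finset

lemma aux_fodd (x : ℝ) : (Real.exp (-x) - 1)/(Real.exp (-x) + 1)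
    = -((Real.exp x - 1)/(Real.exp x + 1)) := by
  have h1 : Real.exp x + 1 ≠ 0 := by positivity
  have h2 : Real.exp (-x) + 1 ≠ 0 := by positivity
  have hE : Real.exp (-x) * Real.exp x = 1 := by rw [← Real.exp_add]; simp
  rw [← neg_div, div_eq_div_iff h2 h1]
  linear_combination 2 * hE

lemma aux_pointwise (x t : ℝ) (ht : 0 ≤ t) (h : t ≤ |x|) :
    ((Real.exp x - 1)/(Real.exp x + 1) - Real.sign x)^2 ≤ 4 * Real.exp (-2*t) := by
  have key : ∀ y : ℝ, 0 < y → t ≤ y →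
      ((Real.exp y - 1)/(Real.exp y + 1) - Real.sign y)^2 ≤ 4 * Real.exp (-2*t) := by
    intro y hy hty
    rw [Real.sign_of_pos hy]
    have h1 : (0:ℝ) < Real.exp y + 1 := by positivity
    have e1 : (Real.exp y - 1)/(Real.exp y + 1) - 1 = -2/(Real.exp y + 1) := by
      field_simp
      ring
    rw [e1]
    have e2 : (-2/(Real.exp y + 1))^2 = 4/(Real.exp y + 1)^2 := by
      rw [div_pow]; norm_num
    rw [e2]
    have h3 : Real.exp t ≤ Real.exp y + 1 := by
      have := Real.exp_le_exp.mpr hty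
      linarith
    have h4 : Real.exp t ^ 2 ≤ (Real.exp y + 1)^2 := by
      apply pow_le_pow_left₀ (Real.exp_pos t).le h3
    have h5 : (4:ℝ)/(Real.exp y + 1)^2 ≤ 4 / Real.exp t ^ 2 := by
      apply div_le_div_of_nonneg_left (by norm_num) (by positivity) h4
    refine h5.trans_eq ?_
    rw [neg_mul, Real.exp_neg, two_mul, Real.exp_add, sq, div_eq_mul_inv]
  rcases lt_trichotomy x 0 with hx | hx | hx
  · have := key (-x) (by linarith) (by rwa [abs_of_neg hx] at h)
    rw [aux_fodd, Real.sign_neg] at this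
    calc ((Real.exp x - 1)/(Real.exp x + 1) - Real.sign x)^2
        = (-((Real.exp x - 1)/(Real.exp x + 1)) - -Real.sign x)^2 := by ring
      _ ≤ 4 * Real.exp (-2*t) := this
  · subst hx
    have ht0 : t = 0 := le_antisymm (by simpa using h) ht
    subst ht0
    simp only [Real.exp_zero, Real.sign_zero, sub_self, zero_div, sub_zero]
    norm_num
    all_goals positivity
  · exact key x hx (by rwa [abs_of_pos hx] at h)

lemma aux_split {n : ℕ} (F : Fin n → Fin n → ℝ) (hs : ∀ i j, F i j = F j i)
    (hd : ∀ i, F i i = 0) :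
    ∑ i, ∑ j, F i j = 2 * ∑ i, ∑ j ∈ Finset.univ.filter (fun j => i < j), F i j := by
  have key : ∀ i j : Fin n, F i j =
      (if i < j then F i j else 0) + (if j < i then F i j else 0)
        + (if i = j then F i j else 0) := by
    intro i j
    rcases lt_trichotomy i j with h | h | h
    · simp [h, not_lt_of_gt h, h.ne]
    · simp [h]
    · simp [h, not_lt_of_gt h, h.ne']
  calc ∑ i, ∑ j, F i j
      = ∑ i, ∑ j, ((if i < j then F i j else 0) + (if j < i then F i j else 0)
          + (if i = j then F i j else 0)) := by
        refine Finset.sum_congr rfl fun i _ => Finset.sum_congr rfl fun j _ => key i j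
    _ = (∑ i, ∑ j, if i < j then F i j else 0) + (∑ i, ∑ j, if j < i then F i j else 0)
          + (∑ i, ∑ j, if i = j then F i j else 0) := by
        simp [Finset.sum_add_distrib]
    _ = 2 * ∑ i, ∑ j ∈ Finset.univ.filter (fun j => i < j), F i j := by
        have hA : ∀ i : Fin n, (∑ j, if i < j then F i j else 0)
            = ∑ j ∈ Finset.univ.filter (fun j => i < j), F i j := by
          intro i; rw [Finset.sum_filter]
        have hB : (∑ i, ∑ j, if j < i then F i j else 0)
            = ∑ i, ∑ j, if i < j then F i j else 0 := by
          rw [Finset.sum_comm]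
          refine Finset.sum_congr rfl fun i _ => Finset.sum_congr rfl fun j _ => ?_
          rw [hs]
        have hC : (∑ i : Fin n, ∑ j, if i = j then F i j else 0) = 0 := by
          refine Finset.sum_eq_zero fun i _ => ?_
          rw [Finset.sum_ite_eq]
          simp [hd]
        rw [hB, hC]
        simp only [hA]
        ring

lemma aux_range_reflect (h : ℕ → ℝ) (k : ℕ) :
    ∑ i ∈ range k, h (k - i) = ∑ t ∈ Icc 1 k, h t := by
  rw [← Finset.sum_range_reflect, ← Finset.Ico_add_one_right_eq_Icc, Finset.sum_Ico_eq_sum_range]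
  refine Finset.sum_congr rfl fun i hi => ?_
  rw [Finset.mem_range] at hi
  congr 1
  omega

lemma aux_group (m : ℕ) (h : ℕ → ℝ) :
    (∑ a : Fin m, ∑ b : Fin m, if a < b then h (b.val - a.val) else 0)
      = ∑ t ∈ Icc 1 (m-1), ((m - t : ℕ) : ℝ) * h t := by
  rw [Finset.sum_comm]
  have inner1 : ∀ b : Fin m, (∑ a : Fin m, if a < b then h (b.val - a.val) else 0)
      = ∑ t ∈ Icc 1 b.val, h t := by
    intro b
    simp only [Fin.lt_def]
    rw [Fin.sum_univ_eq_sum_range (fun i => if i < (b : ℕ) then h ((b : ℕ) - i) else 0) m]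
    rw [← Finset.sum_filter]
    have hf : Finset.filter (fun i => i < (b : ℕ)) (range m) = range b.val := by
      ext i; simp only [Finset.mem_filter, Finset.mem_range]
      have := b.isLt; omega
    rw [hf, aux_range_reflect]
  simp only [inner1]
  rw [Fin.sum_univ_eq_sum_range (fun j => ∑ t ∈ Icc 1 j, h t) m]
  have inner2 : ∀ j ∈ range m, (∑ t ∈ Icc 1 j, h t)
      = ∑ t ∈ Icc 1 (m-1), if t ≤ j then h t else 0 := by
    intro j hj
    rw [Finset.mem_range] at hj
    rw [← Finset.sum_filter]
    congr 1
    ext t; simp only [Finset.mem_filter, Finset.mem_Icc]; omega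
  rw [Finset.sum_congr rfl inner2, Finset.sum_comm]
  refine Finset.sum_congr rfl fun t ht => ?_
  rw [Finset.mem_Icc] at ht
  rw [← Finset.sum_filter]
  have hf : Finset.filter (fun j => t ≤ j) (range m) = Finset.Ico t m := by
    ext j; simp only [Finset.mem_filter, Finset.mem_range, Finset.mem_Ico]; omega
  rw [hf, Finset.sum_const, Nat.card_Ico, nsmul_eq_mul]

lemma aux_geom (n : ℕ) : ∑ t ∈ Icc 1 n, Real.exp (-2*t) ≤ 1/(Real.exp 2 - 1) := by
  have hE : (1:ℝ) < Real.exp 2 := by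
    rw [show (1:ℝ) = Real.exp 0 from (Real.exp_zero).symm]
    exact Real.exp_lt_exp.mpr (by norm_num)
  set r := Real.exp (-2) with hr
  have hr0 : (0:ℝ) ≤ r := (Real.exp_pos _).le
  have hr1 : r < 1 := by
    rw [hr, show (1:ℝ) = Real.exp 0 from (Real.exp_zero).symm]
    exact Real.exp_lt_exp.mpr (by norm_num)
  have heq : ∑ t ∈ Icc 1 n, Real.exp (-2*t) = ∑ t ∈ Finset.Ico 1 (n+1), r ^ t := by
    rw [Finset.Ico_add_one_right_eq_Icc]
    refine Finset.sum_congr rfl fun t _ => ?_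
    rw [hr, ← Real.exp_nat_mul, mul_comm]
  rw [heq]
  refine (geom_sum_Ico_le_of_lt_one hr0 hr1).trans_eq ?_
  have hrE : r * Real.exp 2 = 1 := by rw [hr, ← Real.exp_add]; norm_num
  rw [pow_one, div_eq_div_iff (by linarith) (by linarith)]
  linear_combination hrE

lemma aux_gap (m : ℕ) (g : Fin m → ℝ) (hmono : Monotone g)
    (hsep : ∀ a b : Fin m, a ≠ b → 1 ≤ |g a - g b|) :
    ∀ a b : Fin m, a < b → ((b.val - a.val : ℕ) : ℝ) ≤ g b - g a := by
  have step : ∀ a b : Fin m, a.val < b.val → 1 ≤ g b - g a := by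
    intro a b hab
    have h1 := hsep a b (Fin.ne_of_val_ne (by omega))
    have h2 : g a ≤ g b := hmono (by rw [Fin.le_def]; omega)
    rwa [abs_sub_comm, abs_of_nonneg (by linarith)] at h1
  have H : ∀ d : ℕ, ∀ a b : Fin m, b.val = a.val + d + 1 → ((d:ℝ)+1) ≤ g b - g a := by
    intro d
    induction d with
    | zero => intro a b hb; simpa using step a b (by omega)
    | succ d ih =>
      intro a b hb
      have hbm : a.val + d + 1 < m := by have := b.isLt; omega
      set c : Fin m := ⟨a.val + d + 1, hbm⟩ with hc
      have h1 := ih a c rfl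
      have h2 := step c b (by simp [hc]; omega)
      push_cast
      push_cast at h1
      linarith
  intro a b hab
  have hv : a.val < b.val := hab
  obtain ⟨d, hd⟩ : ∃ d, b.val = a.val + d + 1 := ⟨b.val - a.val - 1, by omega⟩
  have := H d a b hd
  have hsub : b.val - a.val = d + 1 := by omega
  rw [hsub]
  push_cast
  linarith

theorem stmt10 (m : ℕ) (θ : Fin m → ℝ)
    (hsep : ∀ i j, i ≠ j → 1 ≤ |θ i - θ j|) :
    let f : ℝ → ℝ := fun x => (Real.exp x - 1) / (Real.exp x + 1)
    (∑ i, ∑ j ∈ Finset.univ.filter (fun j => i < j),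
        (f (θ i - θ j) - Real.sign (θ i - θ j)) ^ 2)
      ≤ ∑ t ∈ Finset.Icc 1 (m - 1), ((m : ℝ) - t) * 4 * Real.exp (-2 * t) ∧
    (∑ t ∈ Finset.Icc 1 (m - 1), ((m : ℝ) - t) * 4 * Real.exp (-2 * t))
      ≤ (4 / (Real.exp 2 - 1)) * m := by
  intro f
  have hf : ∀ x : ℝ, f x = (Real.exp x - 1) / (Real.exp x + 1) := fun x => rfl
  have hE : (1:ℝ) < Real.exp 2 := by
    rw [show (1:ℝ) = Real.exp 0 from (Real.exp_zero).symm]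
    exact Real.exp_lt_exp.mpr (by norm_num)
  set term : Fin m → Fin m → ℝ :=
    fun i j => (f (θ i - θ j) - Real.sign (θ i - θ j)) ^ 2 with hterm
  constructor
  · -- first inequality
    set σ := Tuple.sort θ with hσ
    set g : Fin m → ℝ := θ ∘ σ with hg
    have hmono : Monotone g := Tuple.monotone_sort θ
    have hsep' : ∀ a b : Fin m, a ≠ b → 1 ≤ |g a - g b| :=
      fun a b hab => hsep (σ a) (σ b) (fun h => hab (σ.injective h))
    have hgap := aux_gap m g hmono hsep'
    have hsymm : ∀ i j, term i j = term j i := by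
      intro i j
      simp only [hterm, hf]
      have h1 : θ j - θ i = -(θ i - θ j) := by ring
      rw [h1, Real.sign_neg, aux_fodd]
      ring
    have hdiag : ∀ i, term i i = 0 := by
      intro i
      simp [hterm, hf, Real.sign_zero]
    set G : Fin m → Fin m → ℝ := fun a b =>
      if a = b then 0 else 4 * Real.exp (-2 * ((Nat.dist a.val b.val : ℕ) : ℝ)) with hG
    have hGsymm : ∀ a b, G a b = G b a := by
      intro a b
      simp only [hG, Nat.dist_comm]
      by_cases h : a = b
      · simp [h]
      · simp [h, Ne.symm h]
    have hGdiag : ∀ a, G a a = 0 := by intro a; simp [hG]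
    have step1 : ∑ i, ∑ j, term i j
        = 2 * ∑ i, ∑ j ∈ Finset.univ.filter (fun j => i < j), term i j :=
      aux_split term hsymm hdiag
    have step2 : ∑ i, ∑ j, term i j = ∑ a, ∑ b, term (σ a) (σ b) := by
      rw [← Equiv.sum_comp σ (fun i => ∑ j, term i j)]
      exact Finset.sum_congr rfl fun a _ => (Equiv.sum_comp σ (term (σ a))).symm
    have step3 : ∑ a, ∑ b, term (σ a) (σ b) ≤ ∑ a, ∑ b, G a b := by
      refine Finset.sum_le_sum fun a _ => Finset.sum_le_sum fun b _ => ?_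
      by_cases hab : a = b
      · subst hab
        rw [hdiag, hGdiag]
      · have habs : ((Nat.dist a.val b.val : ℕ) : ℝ) ≤ |g a - g b| := by
          rcases lt_or_gt_of_ne hab with h | h
          · have := hgap a b h
            have hd : Nat.dist a.val b.val = b.val - a.val :=
              Nat.dist_eq_sub_of_le (le_of_lt h)
            rw [hd, abs_sub_comm, abs_of_nonneg (by linarith)]
            linarith
          · have := hgap b a h
            have hd : Nat.dist a.val b.val = a.val - b.val :=
              Nat.dist_eq_sub_of_le_right (le_of_lt h)
            rw [hd, abs_of_nonneg (by linarith)]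
            linarith
        have hbound := aux_pointwise (g a - g b) ((Nat.dist a.val b.val : ℕ) : ℝ)
          (Nat.cast_nonneg _) habs
        simp only [hterm, hf, hG, if_neg hab]
        simp only [hg, Function.comp] at hbound
        convert hbound using 3 <;> ring
    have step4 : ∑ a, ∑ b, G a b
        = 2 * ∑ t ∈ Finset.Icc 1 (m-1), ((m - t : ℕ) : ℝ) * (4 * Real.exp (-2 * t)) := by
      rw [aux_split G hGsymm hGdiag]
      congr 1
      have : ∀ a : Fin m, ∑ b ∈ Finset.univ.filter (fun j => a < j), G a b
          = ∑ b : Fin m, if a < b then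
              (fun t : ℕ => 4 * Real.exp (-2 * (t : ℝ))) (b.val - a.val) else 0 := by
        intro a
        rw [Finset.sum_filter]
        refine Finset.sum_congr rfl fun b _ => ?_
        by_cases h : a < b
        · have hne : a ≠ b := ne_of_lt h
          have hd : Nat.dist a.val b.val = b.val - a.val :=
            Nat.dist_eq_sub_of_le (le_of_lt h)
          simp [h, hG, hne, hd]
        · simp [h]
      rw [Finset.sum_congr rfl fun a _ => this a]
      exact aux_group m (fun t : ℕ => 4 * Real.exp (-2 * (t : ℝ)))
    have cast_eq : ∀ t ∈ Finset.Icc 1 (m-1),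
        ((m - t : ℕ) : ℝ) * (4 * Real.exp (-2 * t)) = ((m : ℝ) - t) * 4 * Real.exp (-2 * t) := by
      intro t ht
      rw [Finset.mem_Icc] at ht
      have hm : 1 ≤ m := by omega
      have : ((m - t : ℕ) : ℝ) = (m : ℝ) - t := by
        have : t ≤ m := by omega
        push_cast [this]
        ring
      rw [this]; ring
    rw [Finset.sum_congr rfl cast_eq] at step4
    have : 2 * (∑ i, ∑ j ∈ Finset.univ.filter (fun j => i < j), term i j)
        ≤ 2 * ∑ t ∈ Finset.Icc 1 (m-1), ((m : ℝ) - t) * 4 * Real.exp (-2 * t) := by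
      rw [← step1, step2, ← step4]
      exact step3
    linarith
  · -- second inequality
    have h1 : ∑ t ∈ Finset.Icc 1 (m-1), ((m : ℝ) - t) * 4 * Real.exp (-2 * t)
        ≤ ∑ t ∈ Finset.Icc 1 (m-1), (m : ℝ) * (4 * Real.exp (-2 * t)) := by
      refine Finset.sum_le_sum fun t ht => ?_
      rw [Finset.mem_Icc] at ht
      have ht1 : (1:ℝ) ≤ t := by exact_mod_cast ht.1
      have hexp : (0:ℝ) < Real.exp (-2 * t) := Real.exp_pos _
      nlinarith
    refine h1.trans ?_
    rw [← Finset.mul_sum]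
    have h2 : ∑ t ∈ Finset.Icc 1 (m-1), 4 * Real.exp (-2 * (t:ℝ))
        ≤ 4 * (1 / (Real.exp 2 - 1)) := by
      rw [← Finset.mul_sum]
      have := aux_geom (m-1)
      nlinarith
    calc (m : ℝ) * ∑ t ∈ Finset.Icc 1 (m-1), 4 * Real.exp (-2 * (t:ℝ))
        ≤ (m : ℝ) * (4 * (1 / (Real.exp 2 - 1))) := by
          apply mul_le_mul_of_nonneg_left h2 (Nat.cast_nonneg m)
      _ = (4 / (Real.exp 2 - 1)) * m := by ring
end

section
/- Let S, S̄ ∈ ℝ^{n×m} with rank(S̄) ≤ r, let S̃ be the best rank-r approximation of S, and suppose ‖S − S̄‖ ≤ ε (spectral norm). Then for any threshold τ > 0, the number of rows u such that ‖S̃_u − S̄_u‖₂ > τ/2 is at most 32 r ε² / τ². -/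
/-- Euclidean norm of a vector. -/
noncomputable def enorm2 {k : ℕ} (x : Fin k → ℝ) : ℝ := Real.sqrt (∑ i, x i ^ 2)

/-- Spectral norm of a matrix: supremum of `‖X v‖₂` over Euclidean unit-ball vectors `v`. -/
noncomputable def specNorm {n m : ℕ} (X : Matrix (Fin n) (Fin m) ℝ) : ℝ :=
  ⨆ v : {v : Fin m → ℝ // enorm2 v ≤ 1}, enorm2 (X.mulVec v.1)

/-!
Since `S̄` has rank at most `r`, optimality of `S̃` gives `‖S̃ - S‖ ≤ ‖S̄ - S‖ ≤ ε`, hence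
`‖S̃ - S̄‖ ≤ 2ε`, while `S̃ - S̄` has rank at most `2r`. Expanding the rows of a matrix `M` in an
orthonormal basis `(b_j)` of its row space gives `‖M‖_F² = ∑ⱼ ‖M b_j‖² ≤ rank M · ‖M‖²`, so
`‖S̃ - S̄‖_F² ≤ 8rε²`. Each row of norm above `τ/2` contributes more than `τ²/4` to this sum.
-/

open scoped Matrix.Norms.L2Operator RealInnerProductSpace
open Finset Matrix

theorem Finset.card_filter_lt_mul_sq_le_sum_sq {ι : Type*} [Fintype ι] (f : ι → ℝ) {t : ℝ}
    (ht : 0 ≤ t) : #(univ.filter (t < f ·)) * t ^ 2 ≤ ∑ i, f i ^ 2 := by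
  calc (#(univ.filter (t < f ·)) : ℝ) * t ^ 2 = ∑ i ∈ univ.filter (t < f ·), t ^ 2 := by
        rw [sum_const, nsmul_eq_mul]
    _ ≤ ∑ i ∈ univ.filter (t < f ·), f i ^ 2 :=
        sum_le_sum fun i hi => pow_le_pow_left₀ ht (mem_filter.mp hi).2.le 2
    _ ≤ ∑ i, f i ^ 2 := sum_le_sum_of_subset_of_nonneg (subset_univ _) fun i _ _ => sq_nonneg _

theorem Matrix.rank_sub_le {m n R : Type*} [Finite m] [Fintype n] [Field R]
    (A B : Matrix m n R) : (A - B).rank ≤ A.rank + B.rank := by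
  have hrange : LinearMap.range (A - B).mulVecLin ≤
      LinearMap.range A.mulVecLin ⊔ LinearMap.range B.mulVecLin := by
    rintro _ ⟨v, rfl⟩
    rw [mulVecLin_apply, sub_mulVec]
    exact sub_mem (Submodule.mem_sup_left ⟨v, rfl⟩) (Submodule.mem_sup_right ⟨v, rfl⟩)
  exact (Submodule.finrank_mono hrange).trans (Submodule.finrank_add_le_finrank_add_finrank _ _)

theorem Matrix.sum_sq_norm_row_le_rank_mul_sq_l2_opNorm {m n : Type*} [Fintype m] [Fintype n]
    [DecidableEq n] (M : Matrix m n ℝ) : ∑ u, ‖WithLp.toLp 2 (M u)‖ ^ 2 ≤ M.rank * ‖M‖ ^ 2 := by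
  let e : (n → ℝ) ≃ₗ[ℝ] EuclideanSpace ℝ n := (EuclideanSpace.equiv n ℝ).symm.toLinearEquiv
  let W := (Submodule.span ℝ (Set.range M)).map e.toLinearMap
  have hW : Module.finrank ℝ W = M.rank :=
    (e.finrank_map_eq _).trans M.rank_eq_finrank_span_row.symm
  let b := stdOrthonormalBasis ℝ W
  have hrow : ∀ u, WithLp.toLp 2 (M u) ∈ W := fun u =>
    Submodule.mem_map_of_mem (Submodule.subset_span ⟨u, rfl⟩)
  have hinner : ∀ u j, ⟪(b j : EuclideanSpace ℝ n), WithLp.toLp 2 (M u)⟫ =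
      (M *ᵥ (b j : EuclideanSpace ℝ n).ofLp) u := by
    intro u j; simp [EuclideanSpace.inner_eq_star_dotProduct, mulVec]
  calc ∑ u, ‖WithLp.toLp 2 (M u)‖ ^ 2
      = ∑ u, ∑ j, (M *ᵥ (b j : EuclideanSpace ℝ n).ofLp) u ^ 2 := by
        refine sum_congr rfl fun u _ => ?_
        rw [show ‖WithLp.toLp 2 (M u)‖ = ‖(⟨_, hrow u⟩ : W)‖ from rfl, ← b.sum_sq_inner_right]
        simp_rw [← hinner]; rfl
    _ = ∑ j, ‖WithLp.toLp 2 (M *ᵥ (b j : EuclideanSpace ℝ n).ofLp)‖ ^ 2 := by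
        rw [sum_comm]; simp [EuclideanSpace.norm_sq_eq]
    _ ≤ ∑ j : Fin (Module.finrank ℝ W), ‖M‖ ^ 2 := by
        gcongr with j
        have hb : ‖(b j : EuclideanSpace ℝ n)‖ = 1 := b.orthonormal.1 j
        simpa [hb] using M.l2_opNorm_mulVec (b j)
    _ = M.rank * ‖M‖ ^ 2 := by simp [hW]


lemma enorm2_eq_norm_toLp {k : ℕ} (x : Fin k → ℝ) : enorm2 x = ‖WithLp.toLp 2 x‖ := by
  simp [enorm2, EuclideanSpace.norm_eq]

lemma specNorm_eq_l2_opNorm {n m : ℕ} (X : Matrix (Fin n) (Fin m) ℝ) : specNorm X = ‖X‖ := by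
  set f := toEuclideanLin.trans LinearMap.toContinuousLinearMap X
  have hf : ∀ v : Fin m → ℝ, enorm2 (X *ᵥ v) = ‖f (WithLp.toLp 2 v)‖ := fun v => by
    simp [f, enorm2_eq_norm_toLp]
  have hle : ∀ v : {v : Fin m → ℝ // enorm2 v ≤ 1}, enorm2 (X *ᵥ v.1) ≤ ‖X‖ := fun v => by
    rw [hf, l2_opNorm_def]
    exact f.unit_le_opNorm _ ((enorm2_eq_norm_toLp _).symm.trans_le v.2)
  have : Nonempty {v : Fin m → ℝ // enorm2 v ≤ 1} := ⟨⟨0, by simp [enorm2]⟩⟩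
  refine le_antisymm (ciSup_le hle) ?_
  rw [l2_opNorm_def, ← f.sSup_unitClosedBall_eq_norm]
  refine csSup_le ((Metric.nonempty_closedBall.mpr zero_le_one).image _) ?_
  rintro - ⟨x, hx, rfl⟩
  have hx' : enorm2 x.ofLp ≤ 1 := by simpa [enorm2_eq_norm_toLp] using hx
  calc ‖f x‖ = enorm2 (X *ᵥ x.ofLp) := by rw [hf]
    _ ≤ specNorm X := le_ciSup ⟨‖X‖, Set.forall_mem_range.mpr hle⟩ ⟨x.ofLp, hx'⟩

theorem stmt16 (n m r : ℕ) (ε τ : ℝ) (hτ : 0 < τ)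
    (S Sbar Stil : Matrix (Fin n) (Fin m) ℝ)
    (hSbar : Sbar.rank ≤ r)
    (hStil_rank : Stil.rank ≤ r)
    (hStil_best : ∀ X : Matrix (Fin n) (Fin m) ℝ, X.rank ≤ r →
      specNorm (Stil - S) ≤ specNorm (X - S))
    (hε : specNorm (S - Sbar) ≤ ε) :
    ((Finset.univ.filter (fun u : Fin n => τ / 2 < enorm2 (Stil u - Sbar u))).card : ℝ)
      ≤ 32 * r * ε ^ 2 / τ ^ 2 := by
  simp only [specNorm_eq_l2_opNorm] at hStil_best hε
  have hε0 : 0 ≤ ε := (norm_nonneg _).trans hε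
  have hclose : ‖Stil - Sbar‖ ≤ 2 * ε := calc
    ‖Stil - Sbar‖ ≤ ‖Stil - S‖ + ‖S - Sbar‖ := norm_sub_le_norm_sub_add_norm_sub _ _ _
    _ ≤ ‖Sbar - S‖ + ε := add_le_add (hStil_best Sbar hSbar) hε
    _ ≤ 2 * ε := by rw [norm_sub_rev]; linarith
  have hrank : ((Stil - Sbar).rank : ℝ) ≤ 2 * r := by
    exact_mod_cast (rank_sub_le Stil Sbar).trans (by omega)
  have hfrob : ∑ u, enorm2 (Stil u - Sbar u) ^ 2 ≤ 8 * r * ε ^ 2 := calc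
    ∑ u, enorm2 (Stil u - Sbar u) ^ 2 ≤ (Stil - Sbar).rank * ‖Stil - Sbar‖ ^ 2 := by
      simp only [enorm2_eq_norm_toLp]
      exact sum_sq_norm_row_le_rank_mul_sq_l2_opNorm (Stil - Sbar)
    _ ≤ (2 * r) * (2 * ε) ^ 2 := by gcongr
    _ = 8 * r * ε ^ 2 := by ring
  have hcount := card_filter_lt_mul_sq_le_sum_sq (fun u => enorm2 (Stil u - Sbar u)) (half_pos hτ).le
  rw [le_div_iff₀ (by positivity)]
  linarith
end
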